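/- Let (η_k)_{k≥1} be i.i.d. real-valued random variables, let ε ≥ 0 and h > 0. Define the steps s_k⁺ = η_k − ε and s_k⁻ = −η_k − ε, the statistics g_0⁺ = g_0⁻ = 0, g_k⁺ = max(0, g_{k−1}⁺ + s_k⁺), g_k⁻ = max(0, g_{k−1}⁻ + s_k⁻), and the hitting times H⁺ = inf{k ≥ 1 : g_k⁺ ≥ h}, H⁻ = inf{k ≥ 1 : g_k⁻ ≥ h}, and H = min(H⁺, H⁻). If E[H⁺] and E[H⁻] are finite and positive, then 1/E[H] = 1/E[H⁺] + 1/E[H⁻]. -/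

import Mathlib

/-!
If the lower statistic raises the two-sided alarm at time `n`, then the upper statistic is
exactly `0` at `n` (this needs `ε ≥ 0`), so from then on `H⁺` is `n` plus the upper run length of
the shifted sequence, which is independent of the past and distributed like `H⁺`. If instead the
upper statistic raises the alarm, `H⁺ = H`. Taking expectations gives the renewal equation
`E[H⁺] = E[H] + q E[H⁺]`, and symmetrically `E[H⁻] = E[H] + p E[H⁻]`, where `p + q = 1` are the
probabilities that the upper, resp. lower, statistic raises the alarm. Hence
`E[H] = p E[H⁺] = q E[H⁻]`, and `1 / E[H⁺] + 1 / E[H⁻] = (p + q) / E[H]`.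
-/

open MeasureTheory ProbabilityTheory
open scoped ENNReal

lemma ENNReal.inv_eq_inv_add_inv_of_eq_add_mul {t a b p q : ℝ≥0∞} (hpq : p + q = 1)
    (ha : a = t + q * a) (hb : b = t + p * b) (ha_top : a ≠ ⊤) (hb_top : b ≠ ⊤)
    (ha0 : a ≠ 0) (hb0 : b ≠ 0) : t⁻¹ = a⁻¹ + b⁻¹ := by
  have hp : p ≠ ⊤ := ne_top_of_le_ne_top ENNReal.one_ne_top (hpq ▸ le_self_add)
  have hq : q ≠ ⊤ := ne_top_of_le_ne_top ENNReal.one_ne_top (hpq ▸ le_add_self)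
  have hta : t = p * a := ((ENNReal.add_left_inj (ENNReal.mul_ne_top hq ha_top)).1
    (by rw [← add_mul, hpq, one_mul, ← ha])).symm
  have htb : t = q * b := ((ENNReal.add_left_inj (ENNReal.mul_ne_top hp hb_top)).1
    (by rw [← add_mul, add_comm, hpq, one_mul, ← hb])).symm
  have hp0 : p ≠ 0 := by
    rintro rfl
    exact hb0 (by rw [hb, hta, zero_mul, zero_mul, add_zero])
  have hq0 : q ≠ 0 := by
    rintro rfl
    exact ha0 (by rw [ha, htb, zero_mul, zero_mul, add_zero])
  have hinv : ∀ {r c : ℝ≥0∞}, r ≠ 0 → r ≠ ⊤ → t = r * c → c⁻¹ = r * t⁻¹ := by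
    rintro r c hr0 hr rfl
    rw [ENNReal.mul_inv (Or.inl hr0) (Or.inl hr), ← mul_assoc, ENNReal.mul_inv_cancel hr0 hr,
      one_mul]
  rw [hinv hp0 hp hta, hinv hq0 hq htb, ← add_mul, hpq, one_mul]

namespace Cusum

def cusum (ε : ℝ) (u : ℕ → ℝ) : ℕ → ℝ
  | 0 => 0
  | k + 1 => max 0 (cusum ε u k + (u k - ε))

section Deterministic

variable {ε : ℝ} {u : ℕ → ℝ}

@[simp] lemma cusum_zero : cusum ε u 0 = 0 := rfl

lemma cusum_succ (k : ℕ) : cusum ε u (k + 1) = max 0 (cusum ε u k + (u k - ε)) := rfl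

lemma cusum_nonneg : ∀ k, 0 ≤ cusum ε u k
  | 0 => le_rfl
  | _ + 1 => le_max_left _ _

lemma cusum_unique {g : ℕ → ℝ} (h0 : g 0 = 0)
    (hsucc : ∀ k, g (k + 1) = max 0 (g k + (u k - ε))) : g = cusum ε u := by
  funext k
  induction k with
  | zero => exact h0
  | succ k ih => rw [hsucc, ih, cusum_succ]

lemma cusum_add_of_eq_zero {n : ℕ} (hn : cusum ε u n = 0) (k : ℕ) :
    cusum ε u (n + k) = cusum ε (fun i => u (n + i)) k := by
  induction k with
  | zero => exact hn
  | succ k ih => rw [← add_assoc, cusum_succ, ih, cusum_succ]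

/-- While both statistics are positive their sum decreases by `2 ε` at each step, so it is
bounded by the larger of the two at the last time one of them was `0`. -/
lemma exists_cusum_add_cusum_neg_le_max (hε : 0 ≤ ε) (k : ℕ) :
    ∃ j ≤ k, cusum ε u k + cusum ε (-u) k ≤ max (cusum ε u j) (cusum ε (-u) j) := by
  induction k with
  | zero => exact ⟨0, le_rfl, by simp⟩
  | succ k ih =>
    obtain ⟨j, hjk, hj⟩ := ih
    rcases le_or_gt (cusum ε u k + (u k - ε)) 0 with hu | hu
    · refine ⟨k + 1, le_rfl, ?_⟩
      rw [cusum_succ (u := u), max_eq_left hu, zero_add]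
      exact le_max_right _ _
    rcases le_or_gt (cusum ε (-u) k + (-u k - ε)) 0 with hnu | hnu
    · refine ⟨k + 1, le_rfl, ?_⟩
      rw [cusum_succ (u := -u), Pi.neg_apply, max_eq_left hnu, add_zero]
      exact le_max_left _ _
    refine ⟨j, hjk.trans k.le_succ, ?_⟩
    rw [cusum_succ, cusum_succ, Pi.neg_apply, max_eq_right hu.le, max_eq_right hnu.le]
    linarith

lemma measurable_cusum {Ω : Type*} {m : MeasurableSpace Ω} {X : Ω → ℕ → ℝ} {k : ℕ}
    (hX : ∀ i < k, Measurable fun ω => X ω i) : Measurable fun ω => cusum ε (X ω) k := by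
  induction k with
  | zero => exact measurable_const
  | succ k ih =>
    exact measurable_const.max ((ih fun i hi => hX i (by omega)).add
      ((hX k k.lt_succ_self).sub measurable_const))

end Deterministic

noncomputable def runLength (ε h : ℝ) (u : ℕ → ℝ) : ℝ≥0∞ :=
  sInf ((fun n : ℕ => (n : ℝ≥0∞)) '' {k : ℕ | 1 ≤ k ∧ h ≤ cusum ε u k})

section RunLength

variable {ε h : ℝ} {u : ℕ → ℝ}

lemma runLength_eq_iInf :
    runLength ε h u = ⨅ k ∈ {k : ℕ | 1 ≤ k ∧ h ≤ cusum ε u k}, (k : ℝ≥0∞) :=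
  sInf_image

lemma runLength_le {k : ℕ} (hk : 1 ≤ k) (hu : h ≤ cusum ε u k) : runLength ε h u ≤ k :=
  sInf_le ⟨k, ⟨hk, hu⟩, rfl⟩

lemma natCast_le_runLength {n : ℕ} (hu : ∀ k < n, cusum ε u k < h) :
    (n : ℝ≥0∞) ≤ runLength ε h u := by
  refine le_sInf ?_
  rintro _ ⟨k, ⟨-, hk⟩, rfl⟩
  by_contra! hkn
  exact (hu k (by exact_mod_cast hkn)).not_ge hk

lemma exists_le_cusum_of_runLength_ne_top (hu : runLength ε h u ≠ ⊤) :
    ∃ k, h ≤ cusum ε u k := by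
  by_contra! hlt
  refine hu (sInf_eq_top.2 ?_)
  rintro _ ⟨k, ⟨-, hk⟩, rfl⟩
  exact absurd hk (hlt k).not_ge

lemma runLength_eq_add_shift (hh : 0 < h) {n : ℕ} (hu : ∀ k < n, cusum ε u k < h)
    (hn : cusum ε u n = 0) :
    runLength ε h u = n + runLength ε h (fun i => u (n + i)) := by
  have hset : {k : ℕ | 1 ≤ k ∧ h ≤ cusum ε u k} =
      (n + ·) '' {k : ℕ | 1 ≤ k ∧ h ≤ cusum ε (fun i => u (n + i)) k} := by
    ext k
    constructor
    · rintro ⟨hk1, hk⟩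
      have hnk : n < k := by
        by_contra! hkn
        rcases hkn.lt_or_eq with hkn | rfl
        · exact (hu k hkn).not_ge hk
        · exact hh.not_ge (hn ▸ hk)
      refine ⟨k - n, ⟨by omega, ?_⟩, show n + (k - n) = k by omega⟩
      rwa [← cusum_add_of_eq_zero hn, Nat.add_sub_cancel' hnk.le]
    · rintro ⟨j, ⟨hj1, hj⟩, rfl⟩
      exact ⟨le_add_left hj1, by rwa [cusum_add_of_eq_zero hn]⟩
  rw [runLength, hset, Set.image_image, sInf_image, runLength_eq_iInf, ENNReal.add_iInf]
  refine iInf_congr fun k => ?_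
  rw [ENNReal.add_iInf]
  push_cast
  rfl

lemma measurable_runLength : Measurable (runLength ε h) := by
  classical
  simp_rw [funext fun u => runLength_eq_iInf (ε := ε) (h := h) (u := u), Set.mem_ofPred_eq,
    iInf_eq_if]
  refine Measurable.iInf fun k => Measurable.ite ?_ measurable_const measurable_const
  exact (MeasurableSet.const (1 ≤ k)).inter
    (measurableSet_le measurable_const (measurable_cusum fun i _ => measurable_pi_apply i))

end RunLength

section Alarms

variable (ε h : ℝ)

def noAlarmBefore (n : ℕ) : Set (ℕ → ℝ) :=
  {u | ∀ k < n, cusum ε u k < h ∧ cusum ε (-u) k < h}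

def upperAlarmAt (n : ℕ) : Set (ℕ → ℝ) := noAlarmBefore ε h n ∩ {u | h ≤ cusum ε u n}

def lowerAlarmAt (n : ℕ) : Set (ℕ → ℝ) := noAlarmBefore ε h n ∩ {u | h ≤ cusum ε (-u) n}

def alarmAt (n : ℕ) : Set (ℕ → ℝ) := upperAlarmAt ε h n ∪ lowerAlarmAt ε h n

variable {ε h} {u : ℕ → ℝ} {n : ℕ}

lemma neg_mem_lowerAlarmAt : -u ∈ lowerAlarmAt ε h n ↔ u ∈ upperAlarmAt ε h n := by
  simp only [lowerAlarmAt, upperAlarmAt, noAlarmBefore, Set.mem_inter_iff, Set.mem_ofPred_eq,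
    neg_neg, and_comm (a := cusum ε (-u) _ < h)]

lemma cusum_eq_zero_of_mem_lowerAlarmAt (hε : 0 ≤ ε) (hh : 0 < h)
    (hu : u ∈ lowerAlarmAt ε h n) : cusum ε u n = 0 := by
  obtain ⟨hbefore, halarm⟩ := hu
  obtain ⟨j, hjn, hj⟩ := exists_cusum_add_cusum_neg_le_max hε n (u := u)
  have hpos := cusum_nonneg (ε := ε) (u := u) n
  rcases hjn.lt_or_eq with hjn | rfl
  · have hmax := max_lt (hbefore j hjn).1 (hbefore j hjn).2
    linarith [halarm.out]
  · rcases max_choice (cusum ε u j) (cusum ε (-u) j) with hmax | hmax <;> rw [hmax] at hj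
    · linarith [halarm.out]
    · linarith

lemma natCast_le_runLength_of_mem_noAlarmBefore (hu : u ∈ noAlarmBefore ε h n) :
    (n : ℝ≥0∞) ≤ runLength ε h u ∧ (n : ℝ≥0∞) ≤ runLength ε h (-u) :=
  ⟨natCast_le_runLength fun k hk => (hu k hk).1, natCast_le_runLength fun k hk => (hu k hk).2⟩

lemma runLength_eq_of_le_cusum (hh : 0 < h) (hbefore : ∀ k < n, cusum ε u k < h)
    (halarm : h ≤ cusum ε u n) : runLength ε h u = n := by
  refine le_antisymm (runLength_le ?_ halarm) (natCast_le_runLength hbefore)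
  rw [Nat.one_le_iff_ne_zero]
  rintro rfl
  exact hh.not_ge halarm

lemma runLength_eq_of_mem_upperAlarmAt (hh : 0 < h) (hu : u ∈ upperAlarmAt ε h n) :
    runLength ε h u = n :=
  runLength_eq_of_le_cusum hh (fun k hk => (hu.1 k hk).1) hu.2

lemma runLength_eq_add_of_mem_lowerAlarmAt (hε : 0 ≤ ε) (hh : 0 < h)
    (hu : u ∈ lowerAlarmAt ε h n) :
    runLength ε h u = n + runLength ε h (fun i => u (n + i)) :=
  runLength_eq_add_shift hh (fun k hk => (hu.1 k hk).1)
    (cusum_eq_zero_of_mem_lowerAlarmAt hε hh hu)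

lemma disjoint_upperAlarmAt_lowerAlarmAt (hε : 0 ≤ ε) (hh : 0 < h) :
    Disjoint (upperAlarmAt ε h n) (lowerAlarmAt ε h n) := by
  refine Set.disjoint_left.2 fun u hup hlow => hh.not_ge ?_
  exact cusum_eq_zero_of_mem_lowerAlarmAt hε hh hlow ▸ hup.2.out

lemma pairwise_disjoint_alarmAt : Pairwise (Function.onFun Disjoint (alarmAt ε h)) := by
  have key : ∀ {n m : ℕ}, n < m → Disjoint (alarmAt ε h n) (alarmAt ε h m) := by
    intro n m hnm
    refine Set.disjoint_left.2 fun u hn hm => ?_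
    have hbefore : u ∈ noAlarmBefore ε h m := by rcases hm with hm | hm <;> exact hm.1
    rcases hn with hn | hn
    · exact (hbefore n hnm).1.not_ge hn.2
    · exact (hbefore n hnm).2.not_ge hn.2
  intro n m hnm
  rcases hnm.lt_or_gt with hnm | hnm
  · exact key hnm
  · exact (key hnm).symm

lemma runLength_eq_min_add_indicator (hε : 0 ≤ ε) (hh : 0 < h) (hu : u ∈ alarmAt ε h n) :
    runLength ε h u = min (runLength ε h u) (runLength ε h (-u)) +
      (lowerAlarmAt ε h n).indicator (fun v => runLength ε h (fun i => v (n + i))) u := by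
  rcases hu with hup | hlow
  · have hlow : u ∉ lowerAlarmAt ε h n :=
      Set.disjoint_left.1 (disjoint_upperAlarmAt_lowerAlarmAt hε hh) hup
    rw [Set.indicator_of_notMem hlow, add_zero, min_eq_left]
    rw [runLength_eq_of_mem_upperAlarmAt hh hup]
    exact (natCast_le_runLength_of_mem_noAlarmBefore hup.1).2
  · have hneg : runLength ε h (-u) = n :=
      runLength_eq_of_le_cusum hh (fun k hk => (hlow.1 k hk).2) hlow.2
    rw [Set.indicator_of_mem hlow, min_eq_right, hneg,
      ← runLength_eq_add_of_mem_lowerAlarmAt hε hh hlow]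
    rw [hneg]
    exact (natCast_le_runLength_of_mem_noAlarmBefore hlow.1).1

lemma exists_mem_alarmAt_of_runLength_ne_top (hu : runLength ε h u ≠ ⊤) :
    ∃ n, u ∈ alarmAt ε h n := by
  classical
  have hex : ∃ n, h ≤ cusum ε u n ∨ h ≤ cusum ε (-u) n :=
    (exists_le_cusum_of_runLength_ne_top hu).imp fun _ => Or.inl
  refine ⟨Nat.find hex, ?_⟩
  have hbefore : u ∈ noAlarmBefore ε h (Nat.find hex) := fun k hk => by
    simpa only [not_or, not_le] using Nat.find_min hex hk
  rcases Nat.find_spec hex with hup | hlow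
  · exact Or.inl ⟨hbefore, hup⟩
  · exact Or.inr ⟨hbefore, hlow⟩

lemma measurableSet_preimage_noAlarmBefore {Ω : Type*} {m : MeasurableSpace Ω}
    {X : Ω → ℕ → ℝ} (hX : ∀ i < n, Measurable fun ω => X ω i) :
    MeasurableSet (X ⁻¹' noAlarmBefore ε h n) := by
  have hset : X ⁻¹' noAlarmBefore ε h n =
      ⋂ k ∈ Set.Iio n, {ω | cusum ε (X ω) k < h} ∩ {ω | cusum ε (-X ω) k < h} := by
    ext ω
    simp [noAlarmBefore]
  rw [hset]
  refine MeasurableSet.biInter (Set.to_countable _) fun k hk => ?_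
  have hXk : ∀ i < k, Measurable fun ω => X ω i := fun i hi => hX i (hi.trans hk)
  exact (measurableSet_lt (measurable_cusum hXk) measurable_const).inter
    (measurableSet_lt (measurable_cusum fun i hi => (hXk i hi).neg) measurable_const)

lemma measurableSet_preimage_upperAlarmAt {Ω : Type*} {m : MeasurableSpace Ω}
    {X : Ω → ℕ → ℝ} (hX : ∀ i < n, Measurable fun ω => X ω i) :
    MeasurableSet (X ⁻¹' upperAlarmAt ε h n) :=
  (measurableSet_preimage_noAlarmBefore hX).inter
    (measurableSet_le measurable_const (measurable_cusum hX))

lemma measurableSet_preimage_lowerAlarmAt {Ω : Type*} {m : MeasurableSpace Ω}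
    {X : Ω → ℕ → ℝ} (hX : ∀ i < n, Measurable fun ω => X ω i) :
    MeasurableSet (X ⁻¹' lowerAlarmAt ε h n) :=
  (measurableSet_preimage_noAlarmBefore hX).inter
    (measurableSet_le measurable_const (measurable_cusum fun i hi => (hX i hi).neg))

end Alarms

section Renewal

variable {Ω : Type*} [MeasurableSpace Ω] {μ : Measure Ω} {η : ℕ → Ω → ℝ}

lemma map_shift_eq_map (hmeas : ∀ k, Measurable (η k)) (hindep : iIndepFun η μ)
    (hident : ∀ k, IdentDistrib (η k) (η 0) μ μ) (n : ℕ) :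
    μ.map (fun ω i => η (n + i) ω) = μ.map (fun ω i => η i ω) := by
  rw [(hindep.precomp (add_right_injective n)).map_fun_eq_infinitePi_map (fun i => hmeas _),
    hindep.map_fun_eq_infinitePi_map hmeas]
  simp_rw [(hident _).map_eq]

/-- The future after time `n` is independent of the first `n` observations and distributed
like the whole sequence. -/
lemma setLIntegral_comp_shift (hmeas : ∀ k, Measurable (η k)) (hindep : iIndepFun η μ)
    (hident : ∀ k, IdentDistrib (η k) (η 0) μ μ) {n : ℕ} {B : Set Ω}
    (hB : MeasurableSet[⨆ i ∈ Set.Iio n, MeasurableSpace.comap (η i) inferInstance] B)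
    {f : (ℕ → ℝ) → ℝ≥0∞} (hf : Measurable f) :
    ∫⁻ ω in B, f (fun i => η (n + i) ω) ∂μ = μ B * ∫⁻ ω, f (fun i => η i ω) ∂μ := by
  have hle : ∀ i, MeasurableSpace.comap (η i) inferInstance ≤ ‹MeasurableSpace Ω› :=
    fun i => (hmeas i).comap_le
  have hind := indep_iSup_of_disjoint hle hindep.iIndep (Set.Iio_disjoint_Ici le_rfl (a := n))
  have hshift : Measurable[⨆ i ∈ Set.Ici n, MeasurableSpace.comap (η i) inferInstance]
      fun ω i => η (n + i) ω :=
    @measurable_pi_lambda _ _ _ (_) _ _ fun i => (comap_measurable (η (n + i))).mono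
      (le_iSup₂ (f := fun j (_ : j ∈ Set.Ici n) => MeasurableSpace.comap (η j) inferInstance)
        (n + i) (Nat.le_add_right n i)) le_rfl
  have hmeasB : MeasurableSet B := iSup₂_le (fun i _ => hle i) B hB
  have hmeasX : Measurable fun ω (i : ℕ) => η i ω := measurable_pi_lambda _ hmeas
  calc ∫⁻ ω in B, f (fun i => η (n + i) ω) ∂μ
      = ∫⁻ ω, B.indicator 1 ω * f (fun i => η (n + i) ω) ∂μ := by
        rw [← lintegral_indicator hmeasB]
        congr 1 with ω
        by_cases hω : ω ∈ B <;> simp [hω]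
    _ = μ B * ∫⁻ ω, f (fun i => η (n + i) ω) ∂μ := by
        rw [lintegral_mul_eq_lintegral_mul_lintegral_of_independent_measurableSpace
          (f := B.indicator 1) (g := fun ω => f (fun i => η (n + i) ω))
          (iSup₂_le fun i _ => hle i) (iSup₂_le fun i _ => hle i) hind
          (measurable_const.indicator hB) (hf.comp hshift), lintegral_indicator_one hmeasB]
    _ = μ B * ∫⁻ ω, f (fun i => η i ω) ∂μ := by
        rw [← lintegral_map hf (hshift.mono (iSup₂_le fun i _ => hle i) le_rfl),
          map_shift_eq_map hmeas hindep hident, lintegral_map hf hmeasX]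

lemma lintegral_eq_tsum_setLIntegral {C : ℕ → Set Ω} (hC : ∀ n, MeasurableSet (C n))
    (hdisj : Pairwise (Function.onFun Disjoint C)) (hcover : μ (⋃ n, C n)ᶜ = 0)
    (f : Ω → ℝ≥0∞) : ∫⁻ ω, f ω ∂μ = ∑' n, ∫⁻ ω in C n, f ω ∂μ := by
  rw [← lintegral_iUnion hC hdisj, Measure.restrict_congr_set (ae_eq_univ.2 hcover),
    Measure.restrict_univ]

variable {ε h : ℝ}

lemma measure_compl_iUnion_alarmAt (hmeas : ∀ k, Measurable (η k))
    (hfin : ∫⁻ ω, runLength ε h (fun i => η i ω) ∂μ ≠ ⊤) :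
    μ (⋃ n, (fun ω i => η i ω) ⁻¹' alarmAt ε h n)ᶜ = 0 := by
  refine measure_mono_null (fun ω hω => ?_)
    (ae_iff.1 (ae_lt_top (measurable_runLength.comp (measurable_pi_lambda _ hmeas)) hfin))
  simp only [Set.mem_compl_iff, Set.mem_iUnion, Set.mem_preimage, not_exists] at hω
  simp only [Set.mem_ofPred_eq, lt_top_iff_ne_top, not_not]
  by_contra hne
  obtain ⟨n, hn⟩ := exists_mem_alarmAt_of_runLength_ne_top hne
  exact hω n hn

lemma tsum_measure_upperAlarmAt_add_tsum_measure_lowerAlarmAt [IsProbabilityMeasure μ]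
    (hmeas : ∀ k, Measurable (η k)) (hε : 0 ≤ ε) (hh : 0 < h)
    (hfin : ∫⁻ ω, runLength ε h (fun i => η i ω) ∂μ ≠ ⊤) :
    ∑' n, μ ((fun ω i => η i ω) ⁻¹' upperAlarmAt ε h n) +
      ∑' n, μ ((fun ω i => η i ω) ⁻¹' lowerAlarmAt ε h n) = 1 := by
  have hX : ∀ {n} i, i < n → Measurable fun ω => η i ω := fun i _ => hmeas i
  have hsum := lintegral_eq_tsum_setLIntegral
    (fun n => measurableSet_preimage_upperAlarmAt hX |>.union
      (measurableSet_preimage_lowerAlarmAt hX))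
    (fun n m hnm => (pairwise_disjoint_alarmAt hnm).preimage _)
    (measure_compl_iUnion_alarmAt hmeas hfin) fun _ => 1
  rw [lintegral_one, measure_univ] at hsum
  rw [hsum, ← ENNReal.tsum_add]
  refine tsum_congr fun n => ?_
  rw [setLIntegral_one, measure_union
    ((disjoint_upperAlarmAt_lowerAlarmAt hε hh).preimage _)
    (measurableSet_preimage_lowerAlarmAt hX)]

lemma lintegral_runLength_eq (hmeas : ∀ k, Measurable (η k)) (hindep : iIndepFun η μ)
    (hident : ∀ k, IdentDistrib (η k) (η 0) μ μ) (hε : 0 ≤ ε) (hh : 0 < h)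
    (hfin : ∫⁻ ω, runLength ε h (fun i => η i ω) ∂μ ≠ ⊤) :
    ∫⁻ ω, runLength ε h (fun i => η i ω) ∂μ =
      ∫⁻ ω, min (runLength ε h (fun i => η i ω)) (runLength ε h (fun i => -η i ω)) ∂μ +
        (∑' n, μ ((fun ω i => η i ω) ⁻¹' lowerAlarmAt ε h n)) *
          ∫⁻ ω, runLength ε h (fun i => η i ω) ∂μ := by
  set X : Ω → ℕ → ℝ := fun ω i => η i ω
  have hX : ∀ {n} i, i < n → Measurable fun ω => X ω i := fun i _ => hmeas i
  have hmeasX : Measurable X := measurable_pi_lambda _ hmeas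
  have hpast : ∀ n, MeasurableSet[⨆ i ∈ Set.Iio n, MeasurableSpace.comap (η i) inferInstance]
      (X ⁻¹' lowerAlarmAt ε h n) := fun n =>
    measurableSet_preimage_lowerAlarmAt fun i hi =>
      (comap_measurable (η i)).mono
        (le_iSup₂ (f := fun j (_ : j ∈ Set.Iio n) => MeasurableSpace.comap (η j) inferInstance)
          i hi) le_rfl
  have hlower : ∀ n, MeasurableSet (X ⁻¹' lowerAlarmAt ε h n) := fun n =>
    measurableSet_preimage_lowerAlarmAt hX
  have halarm : ∀ n, MeasurableSet (X ⁻¹' alarmAt ε h n) := fun n =>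
    (measurableSet_preimage_upperAlarmAt hX).union (hlower n)
  have hdisj : Pairwise (Function.onFun Disjoint fun n => X ⁻¹' alarmAt ε h n) :=
    fun n m hnm => (pairwise_disjoint_alarmAt hnm).preimage _
  have hcover := measure_compl_iUnion_alarmAt hmeas hfin
  have hmin : Measurable fun ω => min (runLength ε h (X ω)) (runLength ε h (-X ω)) :=
    (measurable_runLength.comp hmeasX).min (measurable_runLength.comp hmeasX.neg)
  have hlocal : ∀ n, ∫⁻ ω in X ⁻¹' alarmAt ε h n, runLength ε h (X ω) ∂μ =
      ∫⁻ ω in X ⁻¹' alarmAt ε h n, min (runLength ε h (X ω)) (runLength ε h (-X ω)) ∂μ +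
        μ (X ⁻¹' lowerAlarmAt ε h n) * ∫⁻ ω, runLength ε h (X ω) ∂μ := by
    intro n
    rw [setLIntegral_congr_fun (halarm n) fun ω hω =>
        runLength_eq_min_add_indicator hε hh hω, lintegral_add_left hmin,
      ← setLIntegral_comp_shift hmeas hindep hident (hpast n) measurable_runLength]
    congr 1
    simp_rw [← Set.indicator_comp_right (f := X) (g := fun v => runLength ε h fun i => v (n + i))]
    have hsub : X ⁻¹' lowerAlarmAt ε h n ⊆ X ⁻¹' alarmAt ε h n :=
      Set.preimage_mono Set.subset_union_right
    rw [setLIntegral_indicator (hlower n), Set.inter_eq_self_of_subset_left hsub]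
    rfl
  conv_lhs => rw [lintegral_eq_tsum_setLIntegral halarm hdisj hcover, tsum_congr hlocal,
    ENNReal.tsum_add, ENNReal.tsum_mul_right, ← lintegral_eq_tsum_setLIntegral halarm hdisj hcover]
  rfl

lemma lintegral_runLength_neg_eq (hmeas : ∀ k, Measurable (η k)) (hindep : iIndepFun η μ)
    (hident : ∀ k, IdentDistrib (η k) (η 0) μ μ) (hε : 0 ≤ ε) (hh : 0 < h)
    (hfin : ∫⁻ ω, runLength ε h (fun i => -η i ω) ∂μ ≠ ⊤) :
    ∫⁻ ω, runLength ε h (fun i => -η i ω) ∂μ =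
      ∫⁻ ω, min (runLength ε h (fun i => η i ω)) (runLength ε h (fun i => -η i ω)) ∂μ +
        (∑' n, μ ((fun ω i => η i ω) ⁻¹' upperAlarmAt ε h n)) *
          ∫⁻ ω, runLength ε h (fun i => -η i ω) ∂μ := by
  have hsymm : ∀ n, (fun ω i => -η i ω) ⁻¹' lowerAlarmAt ε h n =
      (fun ω i => η i ω) ⁻¹' upperAlarmAt ε h n := fun n =>
    Set.ext fun _ => neg_mem_lowerAlarmAt
  have := lintegral_runLength_eq (η := fun i ω => -η i ω) (fun k => (hmeas k).neg)
    (hindep.comp (fun _ x => -x) fun _ => measurable_neg)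
    (fun k => (hident k).comp measurable_neg) hε hh hfin
  simpa only [neg_neg, min_comm, hsymm] using this

end Renewal

end Cusum

open Cusum in
/-- Here `η k` (for `k : ℕ`) stands for `η_{k+1}`, so that `gp k` and `gm k` are the upper and
lower CUSUM statistics `g_k⁺` and `g_k⁻`. The hitting times take values in `ℝ≥0∞`, with `⊤`
meaning that the threshold is never reached. -/
theorem two_sided_cusum_arl_identity
    {Ω : Type*} [MeasurableSpace Ω] {μ : Measure Ω} [IsProbabilityMeasure μ]
    (η : ℕ → Ω → ℝ) (hmeas : ∀ k, Measurable (η k))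
    (hindep : iIndepFun η μ)
    (hident : ∀ k, IdentDistrib (η k) (η 0) μ μ)
    (ε : ℝ) (hε : 0 ≤ ε) (h : ℝ) (hh : 0 < h)
    (gp gm : ℕ → Ω → ℝ)
    (hgp0 : ∀ ω, gp 0 ω = 0) (hgm0 : ∀ ω, gm 0 ω = 0)
    (hgp : ∀ k ω, gp (k + 1) ω = max 0 (gp k ω + (η k ω - ε)))
    (hgm : ∀ k ω, gm (k + 1) ω = max 0 (gm k ω + (-(η k ω) - ε)))
    (Hp Hm H : Ω → ℝ≥0∞)
    (hHp : ∀ ω, Hp ω = sInf ((fun n : ℕ => (n : ℝ≥0∞)) '' {k : ℕ | 1 ≤ k ∧ h ≤ gp k ω}))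
    (hHm : ∀ ω, Hm ω = sInf ((fun n : ℕ => (n : ℝ≥0∞)) '' {k : ℕ | 1 ≤ k ∧ h ≤ gm k ω}))
    (hH : ∀ ω, H ω = min (Hp ω) (Hm ω))
    (hp_pos : 0 < ∫⁻ ω, Hp ω ∂μ) (hp_fin : ∫⁻ ω, Hp ω ∂μ < ⊤)
    (hm_pos : 0 < ∫⁻ ω, Hm ω ∂μ) (hm_fin : ∫⁻ ω, Hm ω ∂μ < ⊤) :
    (∫⁻ ω, H ω ∂μ)⁻¹ = (∫⁻ ω, Hp ω ∂μ)⁻¹ + (∫⁻ ω, Hm ω ∂μ)⁻¹ := by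
  have hgp' : ∀ ω k, gp k ω = cusum ε (fun i => η i ω) k := fun ω =>
    congr_fun (cusum_unique (hgp0 ω) (hgp · ω))
  have hgm' : ∀ ω k, gm k ω = cusum ε (fun i => -η i ω) k := fun ω =>
    congr_fun (cusum_unique (hgm0 ω) (hgm · ω))
  obtain rfl : Hp = fun ω => runLength ε h (fun i => η i ω) := funext fun ω => by
    simp only [hHp, hgp', runLength]
  obtain rfl : Hm = fun ω => runLength ε h (fun i => -η i ω) := funext fun ω => by
    simp only [hHm, hgm', runLength]
  obtain rfl : H = _ := funext hH
  exact ENNReal.inv_eq_inv_add_inv_of_eq_add_mul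
    (tsum_measure_upperAlarmAt_add_tsum_measure_lowerAlarmAt hmeas hε hh hp_fin.ne)
    (lintegral_runLength_eq hmeas hindep hident hε hh hp_fin.ne)
    (lintegral_runLength_neg_eq hmeas hindep hident hε hh hm_fin.ne)
    hp_fin.ne hm_fin.ne hp_pos.ne' hm_pos.ne'
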